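/- arXiv:math/0506501 — 6 statements merged into one kernel-verified Lean document; each statement's English description precedes it below -/
import Mathlib

section
/- Let q ≥ 1 be an integer, let r_1,…,r_q be positive real numbers and d_1,…,d_q real numbers. Then the supremum, over all nonzero weakly increasing vectors w ∈ ℝ^q, of the ratio Ψ(w) = −(Σ_{i=1}^q d_i w_i)/(Σ_{i=1}^q r_i w_i²)^{1/2}, equals the maximum of Φ(P) = (Σ_{j=1}^m D_j²/R_j)^{1/2} taken over all slope-decreasing coarsenings P of the data (this maximum is over a nonempty finite set, since the trivial coarsening m = 1 is vacuously slope-decreasing). In particular the supremum is finite and attained. -/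
/-!
View the partial sums `(∑ i < k, r i, ∑ i < k, d i)` as points in the plane. The vertices of
their least concave majorant form a slope-decreasing coarsening (the Harder–Narasimhan one),
found greedily by always jumping to the farthest point of maximal slope. If `μⱼ` are its block
slopes, the step vector `eᵢ = μ_{j(i)} rᵢ` dominates `d` in partial sums with equality at the
end, so for increasing `w` Abel summation gives `∑ dᵢ wᵢ ≥ ∑ eᵢ wᵢ`, and weighted Cauchy–Schwarz
bounds `-∑ eᵢ wᵢ` by `Φ(HN) · (∑ rᵢ wᵢ²)^{1/2}`. Conversely, for every slope-decreasing
coarsening `P` the increasing step vector `wᵢ = -μ_{j(i)}` has `Ψ(w) = Φ(P)`, so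
`Φ(P) ≤ sup Ψ ≤ Φ(HN)`, and `Φ(HN)` is attained on both sides.
-/

open Finset

noncomputable section

namespace HarderNarasimhan

lemma div_lt_of_add_div_add_lt {a b c d : ℝ} (hb : 0 < b) (hd : 0 < d)
    (h : (a + c) / (b + d) < a / b) : c / d < a / b := by
  rw [div_lt_div_iff₀ (add_pos hb hd) hb] at h
  rw [div_lt_div_iff₀ hd hb]
  linarith

lemma sum_mul_le_sum_mul_of_sum_range_le {q : ℕ} {d e w : ℕ → ℝ}
    (hw : ∀ i, i + 1 < q → w i ≤ w (i + 1))
    (hpartial : ∀ k < q, ∑ i ∈ range k, d i ≤ ∑ i ∈ range k, e i)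
    (htotal : ∑ i ∈ range q, d i = ∑ i ∈ range q, e i) :
    ∑ i ∈ range q, e i * w i ≤ ∑ i ∈ range q, d i * w i := by
  have hparts := sum_range_by_parts w (fun i => d i - e i) q
  simp only [smul_eq_mul, sum_sub_distrib, htotal, sub_self, mul_zero, zero_sub] at hparts
  have hnonneg : 0 ≤ ∑ i ∈ range q, w i * (d i - e i) := by
    rw [hparts, neg_nonneg]
    refine sum_nonpos fun i hi => mul_nonpos_of_nonneg_of_nonpos ?_ ?_
    · exact sub_nonneg.2 (hw i (by have := mem_range.1 hi; omega))
    · exact sub_nonpos.2 (hpartial (i + 1) (by have := mem_range.1 hi; omega))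
  have hsplit : ∑ i ∈ range q, w i * (d i - e i)
      = ∑ i ∈ range q, d i * w i - ∑ i ∈ range q, e i * w i := by
    rw [← sum_sub_distrib]
    exact sum_congr rfl fun i _ => by ring
  linarith

lemma sum_mul_mul_le_sqrt_mul_sqrt {ι : Type*} (s : Finset ι) {r f g : ι → ℝ}
    (hr : ∀ i ∈ s, 0 ≤ r i) :
    ∑ i ∈ s, r i * f i * g i ≤ √(∑ i ∈ s, r i * f i ^ 2) * √(∑ i ∈ s, r i * g i ^ 2) := by
  have hcs : (∑ i ∈ s, r i * f i * g i) ^ 2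
      ≤ (∑ i ∈ s, r i * f i ^ 2) * ∑ i ∈ s, r i * g i ^ 2 :=
    sum_sq_le_sum_mul_sum_of_sq_le_mul s (fun i hi => mul_nonneg (hr i hi) (sq_nonneg _))
      (fun i hi => mul_nonneg (hr i hi) (sq_nonneg _)) (fun i _ => le_of_eq (by ring))
  rw [← Real.sqrt_mul (sum_nonneg fun i hi => mul_nonneg (hr i hi) (sq_nonneg _))]
  exact (le_abs_self _).trans (Real.abs_le_sqrt hcs)

lemma sum_Ico_pos {q a b : ℕ} {r : ℕ → ℝ} (hr : ∀ i < q, 0 < r i) (hab : a < b) (hb : b ≤ q) :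
    0 < ∑ i ∈ Ico a b, r i :=
  sum_pos (fun i hi => hr i ((mem_Ico.1 hi).2.trans_le hb)) (nonempty_Ico.2 hab)

/-- Indices are 0-based: block `j` (for `1 ≤ j ≤ m`) is `Ico (idx (j - 1)) (idx j)`, the paper's
`i_{j-1} < i ≤ i_j`. -/
structure IsCoarsening (q m : ℕ) (idx : ℕ → ℕ) : Prop where
  strictMonoOn : StrictMonoOn idx (Set.Iic m)
  zero : idx 0 = 0
  last : idx m = q

def blockSum (f : ℕ → ℝ) (idx : ℕ → ℕ) (j : ℕ) : ℝ := ∑ i ∈ Ico (idx (j - 1)) (idx j), f i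

def blockIndex (idx : ℕ → ℕ) (i : ℕ) : ℕ := sInf {j | i < idx j}

namespace IsCoarsening

variable {q m : ℕ} {idx : ℕ → ℕ} (hP : IsCoarsening q m idx)
include hP

lemma le_last {j : ℕ} (hj : j ≤ m) : idx j ≤ q :=
  hP.last ▸ hP.strictMonoOn.monotoneOn hj (Set.mem_Iic.2 le_rfl) hj

lemma lt_succ {j : ℕ} (hj : j < m) : idx j < idx (j + 1) :=
  hP.strictMonoOn (Set.mem_Iic.2 hj.le) (Set.mem_Iic.2 hj) (Nat.lt_succ_self j)

lemma blockIndex_spec {i : ℕ} (hi : i < q) :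
    1 ≤ blockIndex idx i ∧ blockIndex idx i ≤ m ∧
      idx (blockIndex idx i - 1) ≤ i ∧ i < idx (blockIndex idx i) := by
  have hm : m ∈ {j | i < idx j} := by simpa [hP.last] using hi
  have hmem : i < idx (blockIndex idx i) := Nat.sInf_mem ⟨m, hm⟩
  have hpos : 1 ≤ blockIndex idx i := by
    by_contra h
    rw [Nat.lt_one_iff.1 (not_le.1 h), hP.zero] at hmem
    omega
  have hprev : blockIndex idx i - 1 ∉ {j | i < idx j} :=
    Nat.notMem_of_lt_sInf (by change _ < blockIndex idx i; omega)
  exact ⟨hpos, Nat.sInf_le hm, not_lt.1 hprev, hmem⟩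

lemma blockIndex_eq {i j : ℕ} (hj : 1 ≤ j) (hjm : j ≤ m) (hi : i ∈ Ico (idx (j - 1)) (idx j)) :
    blockIndex idx i = j := by
  obtain ⟨hlo, hhi⟩ := mem_Ico.1 hi
  obtain ⟨-, hbm, -, hbi⟩ := hP.blockIndex_spec (hhi.trans_le (hP.le_last hjm))
  refine le_antisymm (Nat.sInf_le hhi) (not_lt.1 fun hlt => ?_)
  have := hP.strictMonoOn.monotoneOn (Set.mem_Iic.2 hbm) (Set.mem_Iic.2 (by omega))
    (Nat.le_sub_one_of_lt hlt)
  omega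

lemma blockIndex_mono {i i' : ℕ} (hii' : i ≤ i') (hi' : i' < q) :
    blockIndex idx i ≤ blockIndex idx i' :=
  Nat.sInf_le (hii'.trans_lt (hP.blockIndex_spec hi').2.2.2)

lemma sum_range_eq_sum_blockSum (f : ℕ → ℝ) {n : ℕ} (hn : n ≤ m) :
    ∑ i ∈ range (idx n), f i = ∑ j ∈ Icc 1 n, blockSum f idx j := by
  induction n with
  | zero => simp [hP.zero]
  | succ n ih =>
    rw [sum_Icc_succ_top (by omega), ← ih (by omega), blockSum, Nat.add_sub_cancel,
      range_eq_Ico, range_eq_Ico, sum_Ico_consecutive _ (Nat.zero_le _) (hP.lt_succ hn).le]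

lemma blockSum_blockIndex_mul (c f : ℕ → ℝ) {j : ℕ} (hj : 1 ≤ j) (hjm : j ≤ m) :
    blockSum (fun i => c (blockIndex idx i) * f i) idx j = c j * blockSum f idx j := by
  rw [blockSum, blockSum, mul_sum]
  exact sum_congr rfl fun i hi => by rw [hP.blockIndex_eq hj hjm hi]

lemma sum_range_blockIndex_mul (c f : ℕ → ℝ) :
    ∑ i ∈ range q, c (blockIndex idx i) * f i = ∑ j ∈ Icc 1 m, c j * blockSum f idx j := by
  rw [← hP.last, hP.sum_range_eq_sum_blockSum _ le_rfl]
  exact sum_congr rfl fun j hj => hP.blockSum_blockIndex_mul c f (mem_Icc.1 hj).1 (mem_Icc.1 hj).2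

lemma blockSum_pos {r : ℕ → ℝ} (hr : ∀ i < q, 0 < r i) {j : ℕ} (hj : 1 ≤ j) (hjm : j ≤ m) :
    0 < blockSum r idx j :=
  sum_Ico_pos hr (hP.strictMonoOn (Set.mem_Iic.2 (by omega)) (Set.mem_Iic.2 hjm) (by omega))
    (hP.le_last hjm)

end IsCoarsening

def segSlope (r d : ℕ → ℝ) (a b : ℕ) : ℝ := (∑ i ∈ Ico a b, d i) / ∑ i ∈ Ico a b, r i

def blockSlope (r d : ℕ → ℝ) (idx : ℕ → ℕ) (j : ℕ) : ℝ := segSlope r d (idx (j - 1)) (idx j)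

def SlopeDecreasing (r d : ℕ → ℝ) (idx : ℕ → ℕ) (m : ℕ) : Prop :=
  ∀ j, 1 ≤ j → j < m → segSlope r d (idx j) (idx (j + 1)) < segSlope r d (idx (j - 1)) (idx j)

def phiSq (r d : ℕ → ℝ) (idx : ℕ → ℕ) (m : ℕ) : ℝ :=
  ∑ j ∈ Icc 1 m, blockSum d idx j ^ 2 / blockSum r idx j

def psi (q : ℕ) (r d w : ℕ → ℝ) : ℝ :=
  -(∑ i ∈ range q, d i * w i) / √(∑ i ∈ range q, r i * w i ^ 2)

lemma SlopeDecreasing.antitoneOn_blockSlope {m : ℕ} {idx : ℕ → ℕ} {r d : ℕ → ℝ}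
    (hdec : SlopeDecreasing r d idx m) : AntitoneOn (blockSlope r d idx) (Set.Icc 1 m) :=
  antitoneOn_of_succ_le Set.ordConnected_Icc fun j _ hj hj' => by
    rw [Order.succ_eq_add_one] at hj' ⊢
    simpa only [blockSlope, Nat.add_sub_cancel] using (hdec j hj.1 hj'.2).le

namespace IsCoarsening

variable {q m : ℕ} {idx : ℕ → ℕ} {r d : ℕ → ℝ} (hP : IsCoarsening q m idx)
  (hr : ∀ i < q, 0 < r i)
include hP

lemma sum_blockSlope_mul_eq_phiSq :
    ∑ i ∈ range q, blockSlope r d idx (blockIndex idx i) * d i = phiSq r d idx m := by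
  refine (hP.sum_range_blockIndex_mul _ _).trans (sum_congr rfl fun j _ => ?_)
  change blockSum d idx j / blockSum r idx j * blockSum d idx j = _
  rw [div_mul_eq_mul_div, ← sq]

include hr

lemma sum_blockSlope_sq_mul_eq_phiSq :
    ∑ i ∈ range q, blockSlope r d idx (blockIndex idx i) ^ 2 * r i = phiSq r d idx m := by
  refine (hP.sum_range_blockIndex_mul (fun j => blockSlope r d idx j ^ 2) r).trans
    (sum_congr rfl fun j hj => ?_)
  have hR := (hP.blockSum_pos hr (mem_Icc.1 hj).1 (mem_Icc.1 hj).2).ne'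
  change (blockSum d idx j / blockSum r idx j) ^ 2 * blockSum r idx j = _
  field_simp

lemma sum_range_blockSlope_mul_eq {n : ℕ} (hn : n ≤ m) :
    ∑ i ∈ range (idx n), blockSlope r d idx (blockIndex idx i) * r i =
      ∑ i ∈ range (idx n), d i := by
  rw [hP.sum_range_eq_sum_blockSum _ hn, hP.sum_range_eq_sum_blockSum _ hn]
  refine sum_congr rfl fun j hj => ?_
  obtain ⟨hj1, hjn⟩ := mem_Icc.1 hj
  rw [hP.blockSum_blockIndex_mul (blockSlope r d idx) r hj1 (hjn.trans hn)]
  exact div_mul_cancel₀ _ (hP.blockSum_pos hr hj1 (hjn.trans hn)).ne'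

lemma sum_range_eq_zero_of_phiSq_eq_zero (h : phiSq r d idx m = 0) :
    ∑ i ∈ range q, d i = 0 := by
  have hterms := (sum_eq_zero_iff_of_nonneg fun j hj => div_nonneg (sq_nonneg _)
    (hP.blockSum_pos hr (mem_Icc.1 hj).1 (mem_Icc.1 hj).2).le).1 h
  rw [← hP.last, hP.sum_range_eq_sum_blockSum _ le_rfl]
  refine sum_eq_zero fun j hj => ?_
  have hR := (hP.blockSum_pos hr (mem_Icc.1 hj).1 (mem_Icc.1 hj).2).ne'
  simpa [hR] using hterms j hj

theorem exists_psi_eq_sqrt_phiSq (hq : 0 < q) (hdec : SlopeDecreasing r d idx m) :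
    ∃ w : ℕ → ℝ, (∃ i, i < q ∧ w i ≠ 0) ∧ (∀ i j, i ≤ j → j < q → w i ≤ w j) ∧
      psi q r d w = √(phiSq r d idx m) := by
  by_cases h0 : phiSq r d idx m = 0
  · refine ⟨fun _ => 1, ⟨0, hq, one_ne_zero⟩, fun _ _ _ _ => le_rfl, ?_⟩
    simp [psi, h0, hP.sum_range_eq_zero_of_phiSq_eq_zero hr h0]
  set w : ℕ → ℝ := fun i => -blockSlope r d idx (blockIndex idx i)
  have hdw : ∑ i ∈ range q, d i * w i = -phiSq r d idx m := by
    rw [← hP.sum_blockSlope_mul_eq_phiSq, ← sum_neg_distrib]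
    exact sum_congr rfl fun i _ => by ring
  have hrw : ∑ i ∈ range q, r i * w i ^ 2 = phiSq r d idx m := by
    rw [← hP.sum_blockSlope_sq_mul_eq_phiSq hr]
    exact sum_congr rfl fun i _ => by ring
  refine ⟨w, ?_, fun i j hij hj => ?_, by rw [psi, hdw, hrw, neg_neg, Real.div_sqrt]⟩
  · by_contra! hw
    exact h0 (hrw ▸ sum_eq_zero fun i hi => by rw [hw i (mem_range.1 hi)]; ring)
  · obtain ⟨hi1, him, -⟩ := hP.blockIndex_spec (hij.trans_lt hj)
    obtain ⟨hj1, hjm, -⟩ := hP.blockIndex_spec hj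
    exact neg_le_neg (hdec.antitoneOn_blockSlope ⟨hi1, him⟩ ⟨hj1, hjm⟩
      (hP.blockIndex_mono hij hj))

lemma sum_range_le_sum_range_blockSlope_mul
    (hmax : ∀ j, 1 ≤ j → j ≤ m → ∀ k, idx (j - 1) < k → k < idx j →
      segSlope r d (idx (j - 1)) k ≤ blockSlope r d idx j)
    {k : ℕ} (hk : k < q) :
    ∑ i ∈ range k, d i ≤ ∑ i ∈ range k, blockSlope r d idx (blockIndex idx i) * r i := by
  obtain ⟨hJ1, hJm, hlo, hhi⟩ := hP.blockIndex_spec hk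
  set J := blockIndex idx k
  rw [← sum_range_add_sum_Ico _ hlo, ← sum_range_add_sum_Ico _ hlo,
    hP.sum_range_blockSlope_mul_eq hr ((Nat.sub_le J 1).trans hJm), add_le_add_iff_left]
  have hstep : ∑ i ∈ Ico (idx (J - 1)) k, blockSlope r d idx (blockIndex idx i) * r i
      = blockSlope r d idx J * ∑ i ∈ Ico (idx (J - 1)) k, r i := by
    rw [mul_sum]
    exact sum_congr rfl fun i hi => by
      rw [hP.blockIndex_eq hJ1 hJm (mem_Ico.2 ⟨(mem_Ico.1 hi).1, (mem_Ico.1 hi).2.trans hhi⟩)]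
  rw [hstep]
  rcases hlo.eq_or_lt with heq | hlt
  · simp [heq]
  · exact (div_le_iff₀ (sum_Ico_pos hr hlt hk.le)).1 (hmax J hJ1 hJm k hlt hhi)

theorem psi_le_sqrt_phiSq
    (hmax : ∀ j, 1 ≤ j → j ≤ m → ∀ k, idx (j - 1) < k → k < idx j →
      segSlope r d (idx (j - 1)) k ≤ blockSlope r d idx j)
    {w : ℕ → ℝ} (hw : ∀ i, i + 1 < q → w i ≤ w (i + 1)) :
    psi q r d w ≤ √(phiSq r d idx m) := by
  set μ : ℕ → ℝ := fun i => blockSlope r d idx (blockIndex idx i)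
  have habel : ∑ i ∈ range q, μ i * r i * w i ≤ ∑ i ∈ range q, d i * w i :=
    sum_mul_le_sum_mul_of_sum_range_le hw
      (fun k hk => hP.sum_range_le_sum_range_blockSlope_mul hr hmax hk)
      (by rw [← hP.last]; exact (hP.sum_range_blockSlope_mul_eq hr le_rfl).symm)
  have hcs := sum_mul_mul_le_sqrt_mul_sqrt (range q) (f := fun i => -μ i) (g := w)
    fun i hi => (hr i (mem_range.1 hi)).le
  have hcross : ∑ i ∈ range q, r i * -μ i * w i = -∑ i ∈ range q, μ i * r i * w i := by
    rw [← sum_neg_distrib]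
    exact sum_congr rfl fun i _ => by ring
  have hweight : ∑ i ∈ range q, r i * (-μ i) ^ 2 = phiSq r d idx m := by
    rw [← hP.sum_blockSlope_sq_mul_eq_phiSq hr]
    exact sum_congr rfl fun i _ => by ring
  rw [hcross, hweight] at hcs
  exact div_le_of_le_mul₀ (Real.sqrt_nonneg _) (Real.sqrt_nonneg _) (by linarith)

end IsCoarsening

lemma segSlope_lt_of_segSlope_lt {q a b c : ℕ} {r d : ℕ → ℝ} (hr : ∀ i < q, 0 < r i)
    (hab : a < b) (hbc : b < c) (hc : c ≤ q) (h : segSlope r d a c < segSlope r d a b) :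
    segSlope r d b c < segSlope r d a b := by
  unfold segSlope at h ⊢
  rw [← sum_Ico_consecutive _ hab.le hbc.le, ← sum_Ico_consecutive _ hab.le hbc.le] at h
  exact div_lt_of_add_div_add_lt (sum_Ico_pos hr hab (hbc.le.trans hc)) (sum_Ico_pos hr hbc hc) h

section Greedy

variable (q : ℕ) (r d : ℕ → ℝ)

/-- The farthest point of maximal slope seen from `k`: iterating from `0` runs through the
vertices of the least concave majorant of the points `(∑ i < k, r i, ∑ i < k, d i)`. -/
def nextBreak (k : ℕ) : ℕ :=
  Nat.findGreatest (fun j => k < j ∧ ∀ j' ∈ Ioc k q, segSlope r d k j' ≤ segSlope r d k j) q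

def hnBreak (n : ℕ) : ℕ := (nextBreak q r d)^[n] 0

def hnLength : ℕ := sInf {n | hnBreak q r d n = q}

variable {q r d}

lemma nextBreak_le (k : ℕ) : nextBreak q r d k ≤ q := Nat.findGreatest_le q

lemma nextBreak_spec {k : ℕ} (hk : k < q) :
    k < nextBreak q r d k ∧
      ∀ j ∈ Ioc k q, segSlope r d k j ≤ segSlope r d k (nextBreak q r d k) := by
  obtain ⟨b, hb, hmax⟩ :=
    exists_max_image (Ioc k q) (segSlope r d k) ⟨q, mem_Ioc.2 ⟨hk, le_rfl⟩⟩
  exact Nat.findGreatest_spec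
    (P := fun j => k < j ∧ ∀ j' ∈ Ioc k q, segSlope r d k j' ≤ segSlope r d k j)
    (mem_Ioc.1 hb).2 ⟨(mem_Ioc.1 hb).1, hmax⟩

lemma segSlope_lt_nextBreak {k j : ℕ} (hk : k < q) (hj : nextBreak q r d k < j) (hjq : j ≤ q) :
    segSlope r d k j < segSlope r d k (nextBreak q r d k) := by
  have hnot := Nat.findGreatest_is_greatest hj hjq
  push Not at hnot
  obtain ⟨j', hj', hlt⟩ := hnot ((nextBreak_spec hk).1.trans hj)
  exact hlt.trans_le ((nextBreak_spec hk).2 j' hj')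

lemma hnBreak_succ (n : ℕ) : hnBreak q r d (n + 1) = nextBreak q r d (hnBreak q r d n) :=
  Function.iterate_succ_apply' _ _ _

lemma hnBreak_le (n : ℕ) : hnBreak q r d n ≤ q := by
  cases n with
  | zero => exact Nat.zero_le q
  | succ n => exact hnBreak_succ n ▸ nextBreak_le _

lemma exists_hnBreak_eq : ∃ n, hnBreak q r d n = q := by
  by_contra! hne
  have hlt : ∀ n, hnBreak q r d n < q := fun n => (hnBreak_le n).lt_of_ne (hne n)
  have hgrow : ∀ n, n ≤ hnBreak q r d n := by
    intro n
    induction n with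
    | zero => exact le_rfl
    | succ n ih => rw [hnBreak_succ]; exact ih.trans_lt (nextBreak_spec (hlt n)).1
  exact (hgrow q).not_gt (hlt q)

lemma hnBreak_lt_of_lt_hnLength {j : ℕ} (hj : j < hnLength q r d) : hnBreak q r d j < q :=
  (hnBreak_le j).lt_of_ne (Nat.notMem_of_lt_sInf (s := {n | hnBreak q r d n = q}) hj)

lemma hnBreak_lt_succ {j : ℕ} (hj : j < hnLength q r d) :
    hnBreak q r d j < hnBreak q r d (j + 1) :=
  hnBreak_succ j ▸ (nextBreak_spec (hnBreak_lt_of_lt_hnLength hj)).1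

lemma hnBreak_eq_nextBreak {j : ℕ} (hj : 1 ≤ j) :
    hnBreak q r d j = nextBreak q r d (hnBreak q r d (j - 1)) := by
  simpa only [Nat.sub_add_cancel hj] using hnBreak_succ (q := q) (r := r) (d := d) (j - 1)

lemma isCoarsening_hn : IsCoarsening q (hnLength q r d) (hnBreak q r d) :=
  ⟨strictMonoOn_Iic_of_lt_succ fun j hj => by
      simpa only [Order.succ_eq_add_one] using hnBreak_lt_succ hj,
    rfl, Nat.sInf_mem exists_hnBreak_eq⟩

lemma hnLength_pos (hq : 0 < q) : 0 < hnLength q r d := by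
  refine Nat.pos_of_ne_zero fun h => hq.ne ?_
  simpa [h, hnBreak] using (isCoarsening_hn (q := q) (r := r) (d := d)).last

lemma slopeDecreasing_hn (hr : ∀ i < q, 0 < r i) :
    SlopeDecreasing r d (hnBreak q r d) (hnLength q r d) := by
  intro j hj hjm
  have hab : hnBreak q r d (j - 1) < hnBreak q r d j := by
    simpa only [Nat.sub_add_cancel hj] using
      hnBreak_lt_succ (q := q) (r := r) (d := d) (by omega : j - 1 < _)
  have hbc := hnBreak_lt_succ hjm
  refine segSlope_lt_of_segSlope_lt hr hab hbc (hnBreak_le _) ?_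
  rw [hnBreak_eq_nextBreak hj]
  exact segSlope_lt_nextBreak (hnBreak_lt_of_lt_hnLength (by omega))
    (hnBreak_eq_nextBreak hj ▸ hbc) (hnBreak_le _)

lemma segSlope_le_blockSlope_hn {j : ℕ} (hj : 1 ≤ j) (hjm : j ≤ hnLength q r d) {k : ℕ}
    (hk : hnBreak q r d (j - 1) < k) (hkj : k < hnBreak q r d j) :
    segSlope r d (hnBreak q r d (j - 1)) k ≤ blockSlope r d (hnBreak q r d) j := by
  rw [blockSlope, hnBreak_eq_nextBreak hj]
  exact (nextBreak_spec (hnBreak_lt_of_lt_hnLength (by omega))).2 k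
    (mem_Ioc.2 ⟨hk, hkj.le.trans (hnBreak_le j)⟩)

end Greedy

end HarderNarasimhan

end

open HarderNarasimhan in
/-- The supremum over nonzero weakly increasing weight vectors `w` of
`Ψ(w) = -(Σ dᵢ wᵢ)/(Σ rᵢ wᵢ²)^{1/2}` equals the maximum of
`Φ(P) = (Σⱼ Dⱼ²/Rⱼ)^{1/2}` over all slope-decreasing coarsenings `P` of the data;
in particular both the supremum and the maximum are finite and attained. -/
theorem statement0 (q : ℕ) (hq : 1 ≤ q) (r d : ℕ → ℝ)
    (hr : ∀ i, i < q → 0 < r i) :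
    ∃ M : ℝ,
      -- M is the maximum of Φ over slope-decreasing coarsenings
      IsGreatest
        {x : ℝ | ∃ m : ℕ, ∃ idx : ℕ → ℕ,
          0 < m ∧
          (∀ j j' : ℕ, j < j' → j' ≤ m → idx j < idx j') ∧
          idx 0 = 0 ∧ idx m = q ∧
          -- slope-decreasing: D_j/R_j > D_{j+1}/R_{j+1} for 1 ≤ j < m
          (∀ j : ℕ, 1 ≤ j → j < m →
            (∑ i ∈ Finset.Ico (idx j) (idx (j+1)), d i) /
              (∑ i ∈ Finset.Ico (idx j) (idx (j+1)), r i) <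
            (∑ i ∈ Finset.Ico (idx (j-1)) (idx j), d i) /
              (∑ i ∈ Finset.Ico (idx (j-1)) (idx j), r i)) ∧
          x = Real.sqrt (∑ j ∈ Finset.Icc 1 m,
            (∑ i ∈ Finset.Ico (idx (j-1)) (idx j), d i) ^ 2 /
              (∑ i ∈ Finset.Ico (idx (j-1)) (idx j), r i))} M ∧
      -- M is also the maximum of Ψ over nonzero weakly increasing vectors
      IsGreatest
        {x : ℝ | ∃ w : ℕ → ℝ,
          (∃ i, i < q ∧ w i ≠ 0) ∧
          (∀ i j : ℕ, i ≤ j → j < q → w i ≤ w j) ∧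
          x = -(∑ i ∈ Finset.range q, d i * w i) /
                Real.sqrt (∑ i ∈ Finset.range q, r i * w i ^ 2)} M := by
  have hP := isCoarsening_hn (q := q) (r := r) (d := d)
  have hbound : ∀ w : ℕ → ℝ, (∀ i j, i ≤ j → j < q → w i ≤ w j) →
      psi q r d w ≤ √(phiSq r d (hnBreak q r d) (hnLength q r d)) := fun w hw =>
    hP.psi_le_sqrt_phiSq hr (fun _ hj hjm _ hk hkj => segSlope_le_blockSlope_hn hj hjm hk hkj)
      fun i hi => hw i (i + 1) i.le_succ hi
  refine ⟨_, ⟨⟨hnLength q r d, hnBreak q r d, hnLength_pos hq,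
    fun j j' hjj' hj' => hP.strictMonoOn (hjj'.le.trans hj') hj' hjj', hP.zero, hP.last,
    slopeDecreasing_hn hr, rfl⟩, ?_⟩, ?_, ?_⟩
  · rintro _ ⟨m, idx, -, hmono, h0, hm, hdec, rfl⟩
    have hP' : IsCoarsening q m idx := ⟨fun j _ j' hj' hjj' => hmono j j' hjj' hj', h0, hm⟩
    obtain ⟨w, -, hw, hψ⟩ := hP'.exists_psi_eq_sqrt_phiSq hr hq hdec
    exact hψ.symm.trans_le (hbound w hw)
  · obtain ⟨w, hw0, hw, hψ⟩ := hP.exists_psi_eq_sqrt_phiSq hr hq (slopeDecreasing_hn hr)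
    exact ⟨w, hw0, hw, hψ.symm⟩
  · rintro _ ⟨w, -, hw, rfl⟩
    exact hbound w hw
end

section
/- Let q ≥ 1 be an integer, let r_1,…,r_q be positive real numbers and d_1,…,d_q real numbers, and suppose the slopes μ_i = d_i/r_i are strictly decreasing: μ_1 > μ_2 > … > μ_q. Then the supremum, over all nonzero weakly increasing vectors w ∈ ℝ^q, of Ψ(w) = −(Σ_i d_i w_i)/(Σ_i r_i w_i²)^{1/2} equals (Σ_{i=1}^q r_i μ_i²)^{1/2} = (Σ_{i=1}^q d_i²/r_i)^{1/2}, and it is attained at the strictly increasing vector w with w_i = −μ_i. -/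
lemma term_eq (q : ℕ) (r d : Fin q → ℝ) (hr : ∀ i, 0 < r i) (i : Fin q) :
    r i * (d i / r i) ^ 2 = d i ^ 2 / r i := by
  have : r i ≠ 0 := (hr i).ne'
  field_simp

lemma attain_eq (q : ℕ) (r d : Fin q → ℝ) (hr : ∀ i, 0 < r i) :
    -(∑ i, d i * (-(d i / r i))) / Real.sqrt (∑ i, r i * (-(d i / r i)) ^ 2)
      = Real.sqrt (∑ i, r i * (d i / r i) ^ 2) := by
  have h1 : ∀ i : Fin q, d i * (-(d i / r i)) = -(r i * (d i / r i) ^ 2) := by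
    intro i
    have : (r i) ≠ 0 := (hr i).ne'
    field_simp
  have h2 : ∀ i : Fin q, r i * (-(d i / r i)) ^ 2 = r i * (d i / r i) ^ 2 := by
    intro i; ring
  rw [Finset.sum_congr rfl fun i _ => h1 i, Finset.sum_congr rfl fun i _ => h2 i,
    Finset.sum_neg_distrib, neg_neg, Real.div_sqrt]

/-- If the slopes `μᵢ = dᵢ/rᵢ` are strictly decreasing, then the supremum
over nonzero weakly increasing vectors `w` of `Ψ(w) = -(Σ dᵢ wᵢ)/(Σ rᵢ wᵢ²)^{1/2}` equals
`(Σ rᵢ μᵢ²)^{1/2} = (Σ dᵢ²/rᵢ)^{1/2}`, and it is attained at the strictly increasing vector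
`w` with `wᵢ = -μᵢ`. -/
theorem statement1 (q : ℕ) (hq : 1 ≤ q) (r d : Fin q → ℝ)
    (hr : ∀ i, 0 < r i)
    (hμ : StrictAnti (fun i : Fin q => d i / r i)) :
    IsGreatest
      {x : ℝ | ∃ w : Fin q → ℝ, w ≠ 0 ∧ Monotone w ∧
        x = -(∑ i, d i * w i) / Real.sqrt (∑ i, r i * w i ^ 2)}
      (Real.sqrt (∑ i, r i * (d i / r i) ^ 2)) ∧
    Real.sqrt (∑ i, r i * (d i / r i) ^ 2) = Real.sqrt (∑ i, d i ^ 2 / r i) ∧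
    StrictMono (fun i : Fin q => -(d i / r i)) ∧
    -(∑ i, d i * (-(d i / r i))) / Real.sqrt (∑ i, r i * (-(d i / r i)) ^ 2)
      = Real.sqrt (∑ i, r i * (d i / r i) ^ 2) := by
  refine ⟨⟨?_, ?_⟩, ?_, hμ.neg, attain_eq q r d hr⟩
  · -- membership
    by_cases hd : d = 0
    · refine ⟨fun _ => 1, ?_, monotone_const, ?_⟩
      · intro h
        have := congrFun h ⟨0, hq⟩
        norm_num at this
      · simp [hd]
    · refine ⟨fun i => -(d i / r i), ?_, (hμ.neg).monotone, (attain_eq q r d hr).symm⟩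
      intro h
      apply hd
      funext i
      have := congrFun h i
      simp only [Pi.zero_apply, neg_eq_zero, div_eq_zero_iff] at this
      rcases this with h' | h'
      · exact h'
      · exact absurd h' (hr i).ne'
  · -- upper bound
    rintro x ⟨w, hw0, hmono, rfl⟩
    have hA : 0 < ∑ i, r i * w i ^ 2 := by
      obtain ⟨i, hi⟩ := Function.ne_iff.mp hw0
      refine Finset.sum_pos' (fun j _ => mul_nonneg (hr j).le (sq_nonneg _))
        ⟨i, Finset.mem_univ i, mul_pos (hr i) (pow_two_pos_of_ne_zero hi)⟩
    rw [div_le_iff₀ (Real.sqrt_pos.mpr hA)]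
    have key := Finset.sum_mul_sq_le_sq_mul_sq Finset.univ
      (fun i => Real.sqrt (r i) * (-(d i / r i))) (fun i => Real.sqrt (r i) * w i)
    have e1 : ∀ i : Fin q,
        (Real.sqrt (r i) * (-(d i / r i))) * (Real.sqrt (r i) * w i) = -(d i * w i) := by
      intro i
      have hs : Real.sqrt (r i) * Real.sqrt (r i) = r i := Real.mul_self_sqrt (hr i).le
      have hdd : r i * (d i / r i) = d i := by
        rw [mul_comm, div_mul_cancel₀ _ (hr i).ne']
      calc Real.sqrt (r i) * (-(d i / r i)) * (Real.sqrt (r i) * w i)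
          = -((Real.sqrt (r i) * Real.sqrt (r i)) * (d i / r i) * w i) := by ring
        _ = -(d i * w i) := by rw [hs, hdd]
    have e2 : ∀ i : Fin q,
        (Real.sqrt (r i) * (-(d i / r i))) ^ 2 = r i * (d i / r i) ^ 2 := by
      intro i
      have hs : Real.sqrt (r i) * Real.sqrt (r i) = r i := Real.mul_self_sqrt (hr i).le
      calc (Real.sqrt (r i) * (-(d i / r i))) ^ 2
          = (Real.sqrt (r i) * Real.sqrt (r i)) * (d i / r i) ^ 2 := by ring
        _ = r i * (d i / r i) ^ 2 := by rw [hs]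
    have e3 : ∀ i : Fin q, (Real.sqrt (r i) * w i) ^ 2 = r i * w i ^ 2 := by
      intro i
      have hs : Real.sqrt (r i) * Real.sqrt (r i) = r i := Real.mul_self_sqrt (hr i).le
      calc (Real.sqrt (r i) * w i) ^ 2
          = (Real.sqrt (r i) * Real.sqrt (r i)) * w i ^ 2 := by ring
        _ = r i * w i ^ 2 := by rw [hs]
    rw [Finset.sum_congr rfl fun i _ => e1 i, Finset.sum_congr rfl fun i _ => e2 i,
      Finset.sum_congr rfl fun i _ => e3 i, Finset.sum_neg_distrib] at key
    calc -(∑ i, d i * w i) ≤ |(-(∑ i, d i * w i))| := le_abs_self _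
      _ = Real.sqrt ((-(∑ i, d i * w i)) ^ 2) := (Real.sqrt_sq_eq_abs _).symm
      _ ≤ Real.sqrt ((∑ i, r i * (d i / r i) ^ 2) * ∑ i, r i * w i ^ 2) :=
          Real.sqrt_le_sqrt key
      _ = Real.sqrt (∑ i, r i * (d i / r i) ^ 2) * Real.sqrt (∑ i, r i * w i ^ 2) :=
          Real.sqrt_mul (Finset.sum_nonneg fun i _ => mul_nonneg (hr i).le (sq_nonneg _)) _
  · -- sqrt equality
    rw [Finset.sum_congr rfl fun i _ => term_eq q r d hr i]
end

section
/- Let q ≥ 1 be an integer, let r_1,…,r_q be positive real numbers and d_1,…,d_q real numbers. Suppose the supremum, over nonzero weakly increasing vectors w ∈ ℝ^q, of Ψ(w) = −(Σ_i d_i w_i)/(Σ_i r_i w_i²)^{1/2} is attained at some strictly increasing vector w* and that Ψ(w*) > 0. Then the slopes μ_i = d_i/r_i are strictly decreasing (μ_1 > μ_2 > … > μ_q), and w* is a positive multiple of the vector (−μ_1,…,−μ_q). -/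
/-!
A strictly increasing maximizer `w` lies in the interior of the cone of weakly increasing
vectors, so it is a local maximum of `Ψ` on all of `ℝ^q` and every partial derivative of `Ψ`
vanishes there. The `i`-th one gives `dᵢ · Σ rⱼwⱼ² = (Σ dⱼwⱼ) · rᵢwᵢ`, so `w` is the positive
multiple `(Σ rⱼwⱼ²) / (-Σ dⱼwⱼ)` of `(-μ₁, …, -μ_q)`, which turns the strict monotonicity
of `w` into strict antitonicity of `μ`.
-/

open Filter Topology Function Finset

noncomputable def psi {ι : Type*} [Fintype ι] (r d w : ι → ℝ) : ℝ :=
  -(∑ i, d i * w i) / √(∑ i, r i * w i ^ 2)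

theorem StrictMono.eventually_strictMono_nhds {ι β : Type*} [Preorder ι] [Finite ι]
    [TopologicalSpace β] [LinearOrder β] [OrderClosedTopology β] {w : ι → β}
    (hw : StrictMono w) : ∀ᶠ v in 𝓝 w, StrictMono v := by
  simp only [StrictMono, eventually_all]
  exact fun a b hab =>
    (continuous_apply a).continuousAt.eventually_lt (continuous_apply b).continuousAt (hw hab)

theorem sum_apply_update {ι α M : Type*} [Fintype ι] [DecidableEq ι] [AddCommGroup M]
    (φ : ι → α → M) (g : ι → α) (i : ι) (x : α) :
    ∑ j, φ j (update g i x j) = ∑ j, φ j (g j) + (φ i x - φ i (g i)) := by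
  rw [← add_sum_erase _ _ (mem_univ i), ← add_sum_erase _ _ (mem_univ i), update_self,
    sum_congr rfl fun j hj => by rw [update_of_ne (ne_of_mem_erase hj)]]
  abel

theorem mul_eq_mul_of_isLocalMax_div_sqrt {a b c e s : ℝ} (hc : 0 < c)
    (h : IsLocalMax (fun t => (a + b * t) / √(c + 2 * e * t + s * t ^ 2)) 0) :
    b * c = a * e := by
  have hnum : HasDerivAt (fun t => a + b * t) b 0 := by
    simpa using ((hasDerivAt_id (0 : ℝ)).const_mul b).const_add a
  have hrad : HasDerivAt (fun t => c + 2 * e * t + s * t ^ 2) (2 * e) 0 := by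
    simpa using (((hasDerivAt_id (0 : ℝ)).const_mul (2 * e)).const_add c).fun_add
      ((hasDerivAt_pow 2 (0 : ℝ)).const_mul s)
  have hsc : √c ≠ 0 := (Real.sqrt_pos.2 hc).ne'
  have hden := hrad.sqrt (by simpa using hc.ne')
  have hderiv := h.hasDerivAt_eq_zero (hnum.div hden (by simpa using hsc))
  simp only [mul_zero, add_zero, zero_pow two_ne_zero] at hderiv
  field_simp at hderiv
  rw [Real.sq_sqrt hc.le] at hderiv
  linarith

section psi

variable {ι : Type*} [Fintype ι] (r d : ι → ℝ)

theorem sum_pos_of_psi_pos {w : ι → ℝ} (h : 0 < psi r d w) :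
    0 < ∑ i, r i * w i ^ 2 ∧ 0 < -∑ i, d i * w i := by
  have hsqrt : 0 < √(∑ i, r i * w i ^ 2) := by
    refine (Real.sqrt_nonneg _).lt_of_ne' fun h0 => ?_
    simp [psi, h0] at h
  exact ⟨Real.sqrt_pos.1 hsqrt, (div_pos_iff_of_pos_right hsqrt).1 h⟩

theorem psi_update_add [DecidableEq ι] (w : ι → ℝ) (i : ι) (t : ℝ) :
    psi r d (update w i (w i + t)) =
      (-∑ j, d j * w j + -d i * t) /
        √(∑ j, r j * w j ^ 2 + 2 * (r i * w i) * t + r i * t ^ 2) := by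
  rw [psi, sum_apply_update (fun j x => d j * x), sum_apply_update (fun j x => r j * x ^ 2)]
  congr 2 <;> ring

theorem isLocalMax_psi [PartialOrder ι] {w : ι → ℝ} (hw : StrictMono w) (hw0 : w ≠ 0)
    (hmax : ∀ v : ι → ℝ, v ≠ 0 → Monotone v → psi r d v ≤ psi r d w) :
    IsLocalMax (psi r d) w := by
  filter_upwards [hw.eventually_strictMono_nhds, eventually_ne_nhds hw0] with v hv hv0
  exact hmax v hv0 hv.monotone

theorem IsLocalMax.psi_stationary {w : ι → ℝ} (h : IsLocalMax (psi r d) w)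
    (hB : 0 < ∑ i, r i * w i ^ 2) (i : ι) :
    d i * ∑ j, r j * w j ^ 2 = (∑ j, d j * w j) * (r i * w i) := by
  classical
  have hpath : Continuous fun t : ℝ => update w i (w i + t) :=
    continuous_const.update i (continuous_const.add continuous_id)
  have hw : IsLocalMax (psi r d) (update w i (w i + 0)) := by simpa using h
  have hline := hw.comp_continuous (g := fun t : ℝ => update w i (w i + t)) hpath.continuousAt
  simp only [comp_def, psi_update_add] at hline
  linarith [mul_eq_mul_of_isLocalMax_div_sqrt hB hline]

end psi

theorem statement2_general (q : ℕ) (r d : Fin q → ℝ)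
    (hr : ∀ i, 0 < r i)
    (wstar : Fin q → ℝ) (hwmono : StrictMono wstar)
    (hmax : ∀ w : Fin q → ℝ, w ≠ 0 → Monotone w →
      -(∑ i, d i * w i) / Real.sqrt (∑ i, r i * w i ^ 2) ≤
        -(∑ i, d i * wstar i) / Real.sqrt (∑ i, r i * wstar i ^ 2))
    (hpos : 0 < -(∑ i, d i * wstar i) / Real.sqrt (∑ i, r i * wstar i ^ 2)) :
    StrictAnti (fun i : Fin q => d i / r i) ∧
    ∃ c : ℝ, 0 < c ∧ ∀ i : Fin q, wstar i = c * (-(d i / r i)) := by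
  obtain ⟨hB, hA⟩ := sum_pos_of_psi_pos r d hpos
  have hw0 : wstar ≠ 0 := by
    rintro rfl
    simp at hB
  have hstat := (isLocalMax_psi r d hwmono hw0 hmax).psi_stationary r d hB
  obtain ⟨c, hc, hrep⟩ : ∃ c, 0 < c ∧ ∀ i, wstar i = c * (-(d i / r i)) := by
    refine ⟨_, div_pos hB hA, fun i => ?_⟩
    have hri := (hr i).ne'
    have hA0 := (neg_pos.1 hA).ne
    field_simp
    linarith [hstat i]
  refine ⟨fun i j hij => ?_, c, hc, hrep⟩
  have hlt := hwmono hij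
  rw [hrep i, hrep j] at hlt
  exact neg_lt_neg_iff.1 (lt_of_mul_lt_mul_left hlt hc.le)

/-- If the supremum over nonzero weakly increasing vectors `w` of
`Ψ(w) = -(Σ dᵢ wᵢ)/(Σ rᵢ wᵢ²)^{1/2}` is attained at some strictly increasing vector `w*`
with `Ψ(w*) > 0`, then the slopes `μᵢ = dᵢ/rᵢ` are strictly decreasing and `w*` is a
positive multiple of `(-μ₁, …, -μ_q)`. -/
theorem statement2 (q : ℕ) (hq : 1 ≤ q) (r d : Fin q → ℝ)
    (hr : ∀ i, 0 < r i)
    (wstar : Fin q → ℝ) (hw0 : wstar ≠ 0) (hwmono : StrictMono wstar)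
    (hmax : ∀ w : Fin q → ℝ, w ≠ 0 → Monotone w →
      -(∑ i, d i * w i) / Real.sqrt (∑ i, r i * w i ^ 2) ≤
        -(∑ i, d i * wstar i) / Real.sqrt (∑ i, r i * wstar i ^ 2))
    (hpos : 0 < -(∑ i, d i * wstar i) / Real.sqrt (∑ i, r i * wstar i ^ 2)) :
    StrictAnti (fun i : Fin q => d i / r i) ∧
    ∃ c : ℝ, 0 < c ∧ ∀ i : Fin q, wstar i = c * (-(d i / r i)) :=
  statement2_general q r d hr wstar hwmono hmax hpos
end

section
/- Let a_0, a_1, b_0, b_1, Q be real numbers with a_0 > 0 and a_0·Q − b_0² > 0, and set F = b_1 − b_0·a_1/a_0. Define f : ℝ → ℝ by f(ν) = −(b_1 + ν·a_1)/(Q + 2·b_0·ν + a_0·ν²)^{1/2} (the expression under the square root is positive for every ν since its discriminant is negative). If F < 0, then a_0·b_1 − a_1·b_0 ≠ 0, the function f attains its supremum over ℝ at ν* = (a_1·Q − b_0·b_1)/(a_0·b_1 − a_1·b_0), and the maximum value is f(ν*) = ( a_1²/a_0 + F²/(Q − b_0²/a_0) )^{1/2}. -/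
/-!
Write `q(ν) = Q + 2b₀ν + a₀ν²`, `ℓ(ν) = b₁ + νa₁`, `S = a₀Q - b₀²`, `D = a₀b₁ - a₁b₀ = a₀F` and
`M² = a₁²/a₀ + F²/(Q - b₀²/a₀)`. Completing the square gives the Cauchy–Schwarz type identity
`M² q(ν) = ℓ(ν)² + (Dν - (a₁Q - b₀b₁))² / S`, so `ℓ(ν)² ≤ M² q(ν)` with equality exactly at `ν*`.
Hence `f(ν) ≤ |ℓ(ν)| / √q(ν) ≤ M`, and `f(ν*) = M` because `ℓ(ν*) = (a₁²S + D²)/(a₀D)` is negative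
when `F < 0`.
-/

namespace Real

theorem div_sqrt_le_sqrt_of_sq_le_mul {x q c : ℝ} (hq : 0 < q) (h : x ^ 2 ≤ c * q) :
    x / √q ≤ √c := by
  rw [div_le_iff₀ (sqrt_pos.2 hq), ← sqrt_mul' _ hq.le]
  exact (le_abs_self x).trans (abs_le_sqrt h)

theorem div_sqrt_eq_sqrt_of_sq_eq_mul {x q c : ℝ} (hx : 0 ≤ x) (hq : 0 < q)
    (h : x ^ 2 = c * q) : x / √q = √c := by
  rw [eq_div_of_mul_eq hq.ne' h.symm, sqrt_div' _ hq.le, sqrt_sq hx]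

end Real

section QuadraticRatio

variable {a0 a1 b0 b1 Q : ℝ}

theorem quadratic_pos_of_discriminant (ha0 : 0 < a0) (hdisc : 0 < a0 * Q - b0 ^ 2) (ν : ℝ) :
    0 < Q + 2 * b0 * ν + a0 * ν ^ 2 := by
  have : a0 * (Q + 2 * b0 * ν + a0 * ν ^ 2) = (a0 * ν + b0) ^ 2 + (a0 * Q - b0 ^ 2) := by ring
  exact pos_of_mul_pos_right (this ▸ by positivity) ha0.le

theorem sq_linear_add_eq_mul_quadratic (ha0 : a0 ≠ 0) (hdisc : a0 * Q - b0 ^ 2 ≠ 0) (ν : ℝ) :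
    (b1 + ν * a1) ^ 2 + ((a0 * b1 - a1 * b0) * ν - (a1 * Q - b0 * b1)) ^ 2 / (a0 * Q - b0 ^ 2) =
      (a1 ^ 2 / a0 + (b1 - b0 * a1 / a0) ^ 2 / (Q - b0 ^ 2 / a0)) *
        (Q + 2 * b0 * ν + a0 * ν ^ 2) := by
  have hdisc' : a0 * Q - b0 ^ 2 = a0 * (Q - b0 ^ 2 / a0) := by field_simp
  have hQ : Q - b0 ^ 2 / a0 ≠ 0 := right_ne_zero_of_mul (hdisc' ▸ hdisc)
  rw [hdisc']
  field_simp
  ring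

theorem linear_at_optimum (ha0 : a0 ≠ 0) (hD : a0 * b1 - a1 * b0 ≠ 0) :
    b1 + (a1 * Q - b0 * b1) / (a0 * b1 - a1 * b0) * a1 =
      (a1 ^ 2 * (a0 * Q - b0 ^ 2) + (a0 * b1 - a1 * b0) ^ 2) / (a0 * (a0 * b1 - a1 * b0)) := by
  rw [div_mul_eq_mul_div, add_div' _ _ _ hD, div_eq_div_iff hD (mul_ne_zero ha0 hD)]
  ring

end QuadraticRatio

/-- with `a₀ > 0`, `a₀Q - b₀² > 0` and Futaki invariant
`F = b₁ - b₀a₁/a₀ < 0`, the function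
`f(ν) = -(b₁ + νa₁)/(Q + 2b₀ν + a₀ν²)^{1/2}` attains its supremum over ℝ at
`ν* = (a₁Q - b₀b₁)/(a₀b₁ - a₁b₀)` (whose denominator is nonzero), with maximum value
`f(ν*) = (a₁²/a₀ + F²/(Q - b₀²/a₀))^{1/2}`. -/
theorem statement3 (a0 a1 b0 b1 Q : ℝ) (ha0 : 0 < a0)
    (hdisc : 0 < a0 * Q - b0 ^ 2)
    (f : ℝ → ℝ)
    (hf : ∀ ν : ℝ, f ν = -(b1 + ν * a1) / Real.sqrt (Q + 2 * b0 * ν + a0 * ν ^ 2))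
    (hF : b1 - b0 * a1 / a0 < 0) :
    a0 * b1 - a1 * b0 ≠ 0 ∧
    IsGreatest (Set.range f) (f ((a1 * Q - b0 * b1) / (a0 * b1 - a1 * b0))) ∧
    f ((a1 * Q - b0 * b1) / (a0 * b1 - a1 * b0)) =
      Real.sqrt (a1 ^ 2 / a0 + (b1 - b0 * a1 / a0) ^ 2 / (Q - b0 ^ 2 / a0)) := by
  have hD : a0 * b1 - a1 * b0 < 0 := by
    have : a0 * b1 - a1 * b0 = a0 * (b1 - b0 * a1 / a0) := by field_simp
    exact this ▸ mul_neg_of_pos_of_neg ha0 hF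
  have hq := quadratic_pos_of_discriminant ha0 hdisc
  have hid := sq_linear_add_eq_mul_quadratic (b1 := b1) (a1 := a1) ha0.ne' hdisc.ne'
  have hsign : b1 + (a1 * Q - b0 * b1) / (a0 * b1 - a1 * b0) * a1 < 0 := by
    rw [linear_at_optimum ha0.ne' hD.ne]
    exact div_neg_of_pos_of_neg
      (add_pos_of_nonneg_of_pos (by positivity) (sq_pos_of_neg hD)) (mul_neg_of_pos_of_neg ha0 hD)
  have hmax : f ((a1 * Q - b0 * b1) / (a0 * b1 - a1 * b0)) =
      Real.sqrt (a1 ^ 2 / a0 + (b1 - b0 * a1 / a0) ^ 2 / (Q - b0 ^ 2 / a0)) := by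
    rw [hf]
    refine Real.div_sqrt_eq_sqrt_of_sq_eq_mul (neg_nonneg.2 hsign.le) (hq _) ?_
    rw [neg_sq, ← hid, mul_div_cancel₀ _ hD.ne]
    simp
  refine ⟨hD.ne, ⟨⟨_, rfl⟩, ?_⟩, hmax⟩
  rintro _ ⟨ν, rfl⟩
  rw [hmax, hf]
  refine Real.div_sqrt_le_sqrt_of_sq_le_mul (hq ν) ?_
  rw [neg_sq, ← hid]
  exact le_add_of_nonneg_right (div_nonneg (sq_nonneg _) hdisc.le)
end

section
/- Let a_0, a_1, b_0, b_1, Q be real numbers with a_0 > 0 and a_0·Q − b_0² > 0, and set F = b_1 − b_0·a_1/a_0. Define f : ℝ → ℝ by f(ν) = −(b_1 + ν·a_1)/(Q + 2·b_0·ν + a_0·ν²)^{1/2}. If F ≥ 0, then the supremum of f over ℝ equals |a_1|/√a_0 (it is approached in the limit ν → +∞ or ν → −∞ according to the sign of a_1). -/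
open Filter Topology

/-- with `a₀ > 0`, `a₀Q - b₀² > 0` and Futaki invariant
`F = b₁ - b₀a₁/a₀ ≥ 0`, the supremum over ℝ of
`f(ν) = -(b₁ + νa₁)/(Q + 2b₀ν + a₀ν²)^{1/2}` equals `|a₁|/√a₀`. -/
theorem statement4 (a0 a1 b0 b1 Q : ℝ) (ha0 : 0 < a0)
    (hdisc : 0 < a0 * Q - b0 ^ 2)
    (f : ℝ → ℝ)
    (hf : ∀ ν : ℝ, f ν = -(b1 + ν * a1) / Real.sqrt (Q + 2 * b0 * ν + a0 * ν ^ 2))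
    (hF : 0 ≤ b1 - b0 * a1 / a0) :
    IsLUB (Set.range f) (|a1| / Real.sqrt a0) := by
  have hsa0 : 0 < Real.sqrt a0 := Real.sqrt_pos.mpr ha0
  have hF' : b0 * a1 ≤ b1 * a0 := by
    rw [sub_nonneg, div_le_iff₀ ha0] at hF
    linarith
  have hq : ∀ ν : ℝ, 0 < Q + 2 * b0 * ν + a0 * ν ^ 2 := by
    intro ν
    nlinarith [sq_nonneg (b0 + a0 * ν), sq_nonneg ν]
  -- upper bound
  have hub : ∀ ν : ℝ, f ν ≤ |a1| / Real.sqrt a0 := by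
    intro ν
    rw [hf]
    have hqν := hq ν
    have hsq : 0 < Real.sqrt (Q + 2 * b0 * ν + a0 * ν ^ 2) := Real.sqrt_pos.mpr hqν
    rw [div_le_div_iff₀ hsq hsa0]
    set s := Real.sqrt (Q + 2 * b0 * ν + a0 * ν ^ 2) with hs
    have key : -(b1 + ν * a1) * a0 ≤ |a1| * |b0 + a0 * ν| := by
      nlinarith [neg_abs_le (a1 * (b0 + a0 * ν)), abs_mul a1 (b0 + a0 * ν)]
    have h2 : |b0 + a0 * ν| ≤ Real.sqrt a0 * s := by
      rw [hs, ← Real.sqrt_sq_eq_abs, ← Real.sqrt_mul ha0.le]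
      apply Real.sqrt_le_sqrt
      nlinarith
    have hs2 : Real.sqrt a0 * Real.sqrt a0 = a0 := Real.mul_self_sqrt ha0.le
    have step1 : -(b1 + ν * a1) * a0 * Real.sqrt a0 ≤ |a1| * (Real.sqrt a0 * s) * Real.sqrt a0 := by
      calc -(b1 + ν * a1) * a0 * Real.sqrt a0
          ≤ (|a1| * |b0 + a0 * ν|) * Real.sqrt a0 :=
            mul_le_mul_of_nonneg_right key hsa0.le
        _ ≤ |a1| * (Real.sqrt a0 * s) * Real.sqrt a0 :=
            mul_le_mul_of_nonneg_right
              (mul_le_mul_of_nonneg_left h2 (abs_nonneg a1)) hsa0.le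
    have step3 : |a1| * (Real.sqrt a0 * s) * Real.sqrt a0 = |a1| * s * a0 := by
      linear_combination |a1| * s * hs2
    have step2 : (-(b1 + ν * a1) * Real.sqrt a0) * a0 ≤ (|a1| * s) * a0 := by
      linarith [step1, step3.le, step3.ge]
    exact le_of_mul_le_mul_right step2 ha0
  constructor
  · rintro x ⟨ν, rfl⟩
    exact hub ν
  · rintro b hb
    set c : ℝ := if 0 ≤ a1 then -1 else 1 with hc
    have hca1 : c * a1 = -|a1| := by
      by_cases h : 0 ≤ a1
      · simp [hc, h, abs_of_nonneg h]
      · simp [hc, h, abs_of_neg (lt_of_not_ge h)]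
    have hc2 : c ^ 2 = 1 := by
      by_cases h : 0 ≤ a1 <;> simp [hc, h]
    have t1 : Tendsto (fun t : ℝ => t⁻¹) atTop (𝓝 0) := tendsto_inv_atTop_zero
    have t2 : Tendsto (fun t : ℝ => |a1| - b1 * t⁻¹) atTop (𝓝 |a1|) := by
      have := tendsto_const_nhds (α := ℝ) (x := |a1|) (f := atTop) |>.sub (t1.const_mul b1)
      simpa using this
    have tin : Tendsto (fun t : ℝ => Q * t⁻¹ ^ 2 + 2 * b0 * c * t⁻¹ + a0) atTop (𝓝 a0) := by
      have h := (((t1.pow 2).const_mul Q).add (t1.const_mul (2 * b0 * c))).add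
        (tendsto_const_nhds (α := ℝ) (x := a0) (f := atTop))
      rw [show a0 = Q * 0 ^ 2 + 2 * b0 * c * 0 + a0 by ring]
      exact h.congr fun t => by ring
    have t3 : Tendsto (fun t : ℝ => Real.sqrt (Q * t⁻¹ ^ 2 + 2 * b0 * c * t⁻¹ + a0))
        atTop (𝓝 (Real.sqrt a0)) :=
      Real.continuous_sqrt.continuousAt.tendsto.comp tin
    have t4 : Tendsto (fun t : ℝ => (|a1| - b1 * t⁻¹) /
        Real.sqrt (Q * t⁻¹ ^ 2 + 2 * b0 * c * t⁻¹ + a0)) atTop (𝓝 (|a1| / Real.sqrt a0)) :=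
      t2.div t3 (ne_of_gt hsa0)
    have heq : ∀ᶠ t : ℝ in atTop, (|a1| - b1 * t⁻¹) /
        Real.sqrt (Q * t⁻¹ ^ 2 + 2 * b0 * c * t⁻¹ + a0) = f (c * t) := by
      filter_upwards [eventually_gt_atTop (0 : ℝ)] with t ht
      rw [hf]
      have ht' : t ≠ 0 := ne_of_gt ht
      have hct : (c * t) ^ 2 = t ^ 2 := by rw [mul_pow, hc2, one_mul]
      have hden : Q + 2 * b0 * (c * t) + a0 * (c * t) ^ 2
          = t ^ 2 * (Q * t⁻¹ ^ 2 + 2 * b0 * c * t⁻¹ + a0) := by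
        rw [hct]; field_simp
      have hnum : -(b1 + c * t * a1) = t * (|a1| - b1 * t⁻¹) := by
        have h : c * t * a1 = t * (c * a1) := by ring
        rw [h, hca1]
        field_simp
        ring
      rw [hden, hnum, Real.sqrt_mul (sq_nonneg t), Real.sqrt_sq ht.le,
        mul_div_mul_left _ _ ht']
    have t5 : Tendsto (fun t : ℝ => f (c * t)) atTop (𝓝 (|a1| / Real.sqrt a0)) :=
      t4.congr' heq
    exact le_of_tendsto t5 (Eventually.of_forall fun t => hb ⟨c * t, rfl⟩)
end

section
/- Let E = V_1 ⊕ V_2 ⊕ … ⊕ V_q be a finite-dimensional complex vector space written as a direct sum of nonzero subspaces, let w_1 < w_2 < … < w_q be integers, and for θ ∈ ℝ let ρ(e^{iθ}) ∈ GL(E) act as multiplication by e^{i w_j θ} on V_j. Then: (i) a Hermitian inner product H on E satisfies H(ρ(e^{iθ})x, ρ(e^{iθ})y) = H(x,y) for all θ, x, y if and only if the subspaces V_1,…,V_q are pairwise H-orthogonal; and (ii) for every Hermitian inner product H on E there exists an invertible linear map α : E → E preserving the flag V_1 ⊂ V_1⊕V_2 ⊂ … ⊂ V_1⊕…⊕V_q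 = E such that the pulled-back inner product (x,y) ↦ H(αx, αy) makes V_1,…,V_q pairwise orthogonal, i.e. is invariant under every ρ(e^{iθ}). -/
/-!
(i) On `V i × V j` the operator `ρ θ` multiplies `H` by `exp (I (w j - w i) θ)`, which is
constant in `θ` only when `i = j`; and a sesquilinear form is determined by its values on the
pairs `V i × V j`.

(ii) Make `H` an inner product and send `x ∈ V j` to `x - P x`, where `P` is the orthogonal
projection onto the strict flag step `⨆ i < j, V i`. This moves `x` only within the flag, so `α`
preserves it, and the image of `V j` is orthogonal to the images of all earlier `V i`.
Injectivity then follows: if `α v = 0`, pairing with `α` of each component of `v` kills that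
image, and `x - P x = 0` forces `x ∈ V j ⊓ ⨆ i < j, V i = ⊥`.
-/

open Complex DirectSum
open scoped InnerProductSpace

theorem LinearMap.ext_of_iSup_eq_top {R R₂ M M₂ : Type*} [Semiring R] [Semiring R₂]
    [AddCommMonoid M] [AddCommMonoid M₂] [Module R M] [Module R₂ M₂] {τ : R →+* R₂}
    {ι : Sort*} {p : ι → Submodule R M} (hp : ⨆ i, p i = ⊤) {f g : M →ₛₗ[τ] M₂}
    (h : ∀ i, ∀ x ∈ p i, f x = g x) : f = g :=
  eqLocus_eq_top.mp <| top_le_iff.mp <| hp ▸ iSup_le fun i x hx ↦ h i x hx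

theorem LinearMap.ext₂_of_iSup_eq_top {R R₂ R₃ M N P : Type*} [Semiring R] [Semiring R₂]
    [CommSemiring R₃] [AddCommMonoid M] [AddCommMonoid N] [AddCommMonoid P] [Module R M]
    [Module R₂ N] [Module R₃ P] {σ : R →+* R₃} {τ : R₂ →+* R₃}
    {ι : Sort*} {p : ι → Submodule R M} (hp : ⨆ i, p i = ⊤)
    {κ : Sort*} {r : κ → Submodule R₂ N} (hr : ⨆ j, r j = ⊤) {f g : M →ₛₗ[σ] N →ₛₗ[τ] P}
    (h : ∀ i j, ∀ x ∈ p i, ∀ y ∈ r j, f x y = g x y) : f = g :=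
  ext_of_iSup_eq_top hp fun i x hx ↦ ext_of_iSup_eq_top hr fun j y hy ↦ h i j x hx y hy

namespace Complex

theorem exp_mul_conj_exp (a b θ : ℝ) :
    exp (I * b * θ) * starRingEnd ℂ (exp (I * a * θ)) = exp (I * (b - a) * θ) := by
  rw [← exp_conj, ← exp_add]
  congr 1
  simp only [map_mul, conj_I, conj_ofReal]
  ring

theorem eq_zero_of_forall_exp_mul_eq_self {c : ℝ} (hc : c ≠ 0) {z : ℂ}
    (h : ∀ θ : ℝ, exp (I * c * θ) * z = z) : z = 0 := by
  have hπ : exp (I * c * (Real.pi / c : ℝ)) = -1 := by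
    rw [← exp_pi_mul_I]
    congr 1
    push_cast
    field_simp [ofReal_ne_zero.mpr hc]
  have := h (Real.pi / c)
  rw [hπ] at this
  linear_combination -this / 2

end Complex

section WeightInvariance

variable {E : Type*} [AddCommGroup E] [Module ℂ E]

theorem sesq_exp_smul_exp_smul (H : E →ₗ⋆[ℂ] E →ₗ[ℂ] ℂ) (a b θ : ℝ) (x y : E) :
    H (exp (I * a * θ) • x) (exp (I * b * θ) • y) = exp (I * (b - a) * θ) * H x y := by
  simp only [map_smulₛₗ, LinearMap.smul_apply, smul_eq_mul, RingHom.id_apply]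
  rw [← mul_assoc, exp_mul_conj_exp]

theorem sesq_invariant_iff_pairwise_orthogonal {ι : Type*} {V : ι → Submodule ℂ E}
    (hV : ⨆ i, V i = ⊤) {w : ι → ℝ} (hw : Function.Injective w) (H : E →ₗ⋆[ℂ] E →ₗ[ℂ] ℂ)
    {ρ : ℝ → E →ₗ[ℂ] E} (hρ : ∀ θ j, ∀ v ∈ V j, ρ θ v = exp (I * w j * θ) • v) :
    (∀ θ x y, H (ρ θ x) (ρ θ y) = H x y) ↔
      ∀ i j, i ≠ j → ∀ x ∈ V i, ∀ y ∈ V j, H x y = 0 := by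
  have hρH : ∀ θ i j, ∀ x ∈ V i, ∀ y ∈ V j,
      H (ρ θ x) (ρ θ y) = exp (I * (w j - w i : ℝ) * θ) * H x y := by
    intro θ i j x hx y hy
    rw [hρ θ i x hx, hρ θ j y hy, sesq_exp_smul_exp_smul, ofReal_sub]
  constructor
  · intro hinv i j hij x hx y hy
    refine eq_zero_of_forall_exp_mul_eq_self (sub_ne_zero.mpr (hw.ne hij.symm)) fun θ ↦ ?_
    rw [← hρH θ i j x hx y hy, hinv]
  · intro horth θ
    have : (H.comp (ρ θ)).compl₂ (ρ θ) = H := by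
      refine LinearMap.ext₂_of_iSup_eq_top hV hV fun i j x hx y hy ↦ ?_
      rw [LinearMap.compl₂_apply, LinearMap.comp_apply, hρH θ i j x hx y hy]
      rcases eq_or_ne i j with rfl | hij
      · simp
      · rw [horth i j hij x hx y hy, mul_zero]
    exact fun x y ↦ congr($this x y)

end WeightInvariance

namespace InnerProductSpace.Core

variable {𝕜 E : Type*} [RCLike 𝕜] [AddCommGroup E] [Module 𝕜 E]

abbrev ofSesqForm (H : E →ₗ⋆[𝕜] E →ₗ[𝕜] 𝕜) (Hsymm : ∀ x y, H y x = starRingEnd 𝕜 (H x y))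
    (Hpos : ∀ x, x ≠ 0 → 0 < RCLike.re (H x x)) : InnerProductSpace.Core 𝕜 E where
  inner x y := H x y
  conj_inner_symm x y := (Hsymm y x).symm
  re_inner_nonneg x := by
    rcases eq_or_ne x 0 with rfl | hx
    · simp
    · exact (Hpos x hx).le
  add_left x y z := by simp
  smul_left x y r := by simp
  definite x hx := by
    by_contra hne
    simpa [show H x x = 0 from hx] using Hpos x hne

end InnerProductSpace.Core

section FlagOrthogonalization

variable {𝕜 E ι : Type*} [RCLike 𝕜] [NormedAddCommGroup E] [InnerProductSpace 𝕜 E]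
  [FiniteDimensional 𝕜 E] [LinearOrder ι] (V : ι → Submodule 𝕜 E) [Decomposition V]

noncomputable def flagOrthogonalize : E →ₗ[𝕜] E :=
  toModule 𝕜 ι E (fun j ↦ (⨆ i < j, V i)ᗮ.starProjection.toLinearMap ∘ₗ (V j).subtype) ∘ₗ
    (decomposeLinearEquiv V).toLinearMap

variable {V}

theorem flagOrthogonalize_apply_of_mem {j : ι} {x : E} (hx : x ∈ V j) :
    flagOrthogonalize V x = x - (⨆ i < j, V i).starProjection x := by
  rw [flagOrthogonalize, LinearMap.comp_apply, LinearEquiv.coe_coe, decomposeLinearEquiv_apply,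
    decompose_of_mem V hx, ← lof_eq_of 𝕜, toModule_lof]
  simp

theorem flagOrthogonalize_apply_mem_orthogonal {j : ι} {x : E} (hx : x ∈ V j) :
    flagOrthogonalize V x ∈ (⨆ i < j, V i)ᗮ := by
  rw [flagOrthogonalize_apply_of_mem hx]
  exact Submodule.sub_starProjection_mem_orthogonal x

theorem flagOrthogonalize_mem_iSup_le {k : ι} {x : E} (hx : x ∈ ⨆ i ≤ k, V i) :
    flagOrthogonalize V x ∈ ⨆ i ≤ k, V i := by
  suffices (⨆ i ≤ k, V i) ≤ (⨆ i ≤ k, V i).comap (flagOrthogonalize V) from this hx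
  refine iSup₂_le fun j hjk x hx ↦ ?_
  rw [Submodule.mem_comap, flagOrthogonalize_apply_of_mem hx]
  have hstrict : (⨆ i < j, V i) ≤ ⨆ i ≤ k, V i := biSup_mono fun i hij ↦ (hij.trans_le hjk).le
  exact sub_mem (le_iSup₂ (f := fun i (_ : i ≤ k) ↦ V i) j hjk hx)
    (hstrict (Submodule.starProjection_apply_mem _ x))

theorem inner_flagOrthogonalize_eq_zero {i j : ι} (hij : i ≠ j) {x y : E} (hx : x ∈ V i)
    (hy : y ∈ V j) : ⟪flagOrthogonalize V x, flagOrthogonalize V y⟫_𝕜 = 0 := by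
  wlog hlt : i < j generalizing i j x y
  · rw [← inner_conj_symm, this hij.symm hy hx (hij.lt_or_gt.resolve_left hlt), map_zero]
  have hle : (⨆ l ≤ i, V l) ≤ ⨆ l < j, V l := biSup_mono fun l hli ↦ hli.trans_lt hlt
  have hx' := hle <| flagOrthogonalize_mem_iSup_le <|
    le_iSup₂ (f := fun l (_ : l ≤ i) ↦ V l) i le_rfl hx
  exact Submodule.inner_right_of_mem_orthogonal hx' (flagOrthogonalize_apply_mem_orthogonal hy)

theorem inner_flagOrthogonalize_eq_inner_decompose {k : ι} {x : E} (hx : x ∈ V k) (v : E) :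
    ⟪flagOrthogonalize V x, flagOrthogonalize V v⟫_𝕜 =
      ⟪flagOrthogonalize V x, flagOrthogonalize V (decompose V v k)⟫_𝕜 := by
  induction v using Decomposition.inductionOn V with
  | zero => simp
  | add v v' hv hv' => simp [inner_add_right, hv, hv']
  | @homogeneous j y =>
    rcases eq_or_ne j k with rfl | hjk
    · rw [decompose_of_mem_same V y.2]
    · rw [decompose_of_mem_ne V y.2 hjk, map_zero, inner_zero_right,
        inner_flagOrthogonalize_eq_zero hjk.symm hx y.2]

theorem eq_zero_of_flagOrthogonalize_eq_zero {j : ι} {x : E} (hx : x ∈ V j)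
    (h : flagOrthogonalize V x = 0) : x = 0 := by
  rw [flagOrthogonalize_apply_of_mem hx, sub_eq_zero] at h
  refine (Decomposition.isInternal V).submodule_iSupIndep.disjoint_biSup
    (y := Set.Iio j) (lt_irrefl j) |>.le_bot ⟨hx, ?_⟩
  rw [h]
  exact Submodule.starProjection_apply_mem _ x

theorem flagOrthogonalize_injective : Function.Injective (flagOrthogonalize V) := by
  refine (injective_iff_map_eq_zero _).mpr fun v hv ↦ (decompose V).injective ?_
  ext k : 2
  have hk := (decompose V v k).2
  have : flagOrthogonalize V (decompose V v k) = 0 := by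
    rw [← inner_self_eq_zero (𝕜 := 𝕜), ← inner_flagOrthogonalize_eq_inner_decompose hk, hv,
      inner_zero_right]
  simpa using eq_zero_of_flagOrthogonalize_eq_zero hk this

end FlagOrthogonalization

theorem statement6_general (q : ℕ) (E : Type*) [AddCommGroup E] [Module ℂ E]
    [FiniteDimensional ℂ E]
    (V : Fin q → Submodule ℂ E) (hV : DirectSum.IsInternal V)
    (w : Fin q → ℤ) (hw : StrictMono w)
    (H : E →ₗ⋆[ℂ] E →ₗ[ℂ] ℂ)
    (Hsymm : ∀ x y : E, H y x = starRingEnd ℂ (H x y))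
    (Hpos : ∀ x : E, x ≠ 0 → 0 < (H x x).re)
    (ρ : ℝ → E →ₗ[ℂ] E)
    (hρ : ∀ θ : ℝ, ∀ j : Fin q, ∀ v ∈ V j,
      ρ θ v = Complex.exp (Complex.I * (w j : ℂ) * (θ : ℂ)) • v) :
    ((∀ (θ : ℝ) (x y : E), H (ρ θ x) (ρ θ y) = H x y) ↔
      (∀ i j : Fin q, i ≠ j → ∀ x ∈ V i, ∀ y ∈ V j, H x y = 0)) ∧
    (∃ α : E →ₗ[ℂ] E, Function.Bijective α ∧
      (∀ k : Fin q, ∀ v ∈ (⨆ i ≤ k, V i), α v ∈ (⨆ i ≤ k, V i)) ∧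
      (∀ i j : Fin q, i ≠ j → ∀ x ∈ V i, ∀ y ∈ V j, H (α x) (α y) = 0)) := by
  have hρ' : ∀ θ j, ∀ v ∈ V j, ρ θ v = exp (I * ((w j : ℝ) : ℂ) * θ) • v := by
    exact_mod_cast hρ
  refine ⟨sesq_invariant_iff_pairwise_orthogonal hV.submodule_iSup_eq_top
    (Int.cast_injective.comp hw.injective) H hρ', ?_⟩
  let c := InnerProductSpace.Core.ofSesqForm H Hsymm Hpos
  let := c.toNormedAddCommGroup
  let := InnerProductSpace.ofCore c.toCore
  let := hV.chooseDecomposition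
  have hinj := flagOrthogonalize_injective (V := V)
  exact ⟨flagOrthogonalize V, ⟨hinj, LinearMap.injective_iff_surjective.mp hinj⟩,
    fun _ _ ↦ flagOrthogonalize_mem_iSup_le, fun _ _ hij _ hx _ hy ↦
      inner_flagOrthogonalize_eq_zero hij hx hy⟩

/-- For `E = V₁ ⊕ ⋯ ⊕ V_q` (nonzero subspaces) with strictly increasing
integer weights and `ρ(e^{iθ})` acting as `e^{i wⱼ θ}` on `Vⱼ`:
(i) a Hermitian inner product `H` is invariant under every `ρ(e^{iθ})` iff the `Vⱼ`
are pairwise `H`-orthogonal; (ii) for every Hermitian inner product `H` there is an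
invertible linear map `α` preserving the flag `V₁ ⊂ V₁⊕V₂ ⊂ ⋯ ⊂ E` such that the
pulled-back product `(x,y) ↦ H(αx, αy)` makes the `Vⱼ` pairwise orthogonal, i.e. is
invariant under every `ρ(e^{iθ})`. -/
theorem statement6 (q : ℕ) (E : Type*) [AddCommGroup E] [Module ℂ E]
    [FiniteDimensional ℂ E]
    (V : Fin q → Submodule ℂ E) (hV : DirectSum.IsInternal V) (hVne : ∀ i, V i ≠ ⊥)
    (w : Fin q → ℤ) (hw : StrictMono w)
    (H : E →ₗ⋆[ℂ] E →ₗ[ℂ] ℂ)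
    (Hsymm : ∀ x y : E, H y x = starRingEnd ℂ (H x y))
    (Hpos : ∀ x : E, x ≠ 0 → 0 < (H x x).re)
    (ρ : ℝ → E →ₗ[ℂ] E)
    (hρ : ∀ θ : ℝ, ∀ j : Fin q, ∀ v ∈ V j,
      ρ θ v = Complex.exp (Complex.I * (w j : ℂ) * (θ : ℂ)) • v) :
    ((∀ (θ : ℝ) (x y : E), H (ρ θ x) (ρ θ y) = H x y) ↔
      (∀ i j : Fin q, i ≠ j → ∀ x ∈ V i, ∀ y ∈ V j, H x y = 0)) ∧
    (∃ α : E →ₗ[ℂ] E, Function.Bijective α ∧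
      (∀ k : Fin q, ∀ v ∈ (⨆ i ≤ k, V i), α v ∈ (⨆ i ≤ k, V i)) ∧
      (∀ i j : Fin q, i ≠ j → ∀ x ∈ V i, ∀ y ∈ V j, H (α x) (α y) = 0)) :=
  statement6_general q E V hV w hw H Hsymm Hpos ρ hρ
end
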